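/- arXiv:1705.06787 — 4 statements merged into one kernel-verified Lean document; each statement's English description precedes it below -/
import Mathlib

section
/- Under the same hypotheses (V real inner product space, V = V₁ ⊕ V₂ orthogonal, P orthogonal projection onto V₁, u ∈ V₁, v ∈ V₂, w ∈ V, 0 < C < 1 with 1 + ‖Pw‖ ≥ C(1 + ‖w‖)), one has (1 + ‖u + v + w‖)² ≥ C(1 + ‖v‖)/(1 + ‖u‖). -/
theorem projection_lemma_second
    {V : Type*} [NormedAddCommGroup V] [InnerProductSpace ℝ V]
    (V₁ V₂ : Submodule ℝ V) [V₁.HasOrthogonalProjection]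
    (horth : ∀ x ∈ V₁, ∀ y ∈ V₂, (inner ℝ x y : ℝ) = 0)
    (hsum : V₁ ⊔ V₂ = ⊤)
    (u v w : V) (hu : u ∈ V₁) (hv : v ∈ V₂)
    (C : ℝ) (hC0 : 0 < C) (hC1 : C < 1)
    (hPw : 1 + ‖(V₁.orthogonalProjectionOnto w : V)‖ ≥ C * (1 + ‖w‖)) :
    (1 + ‖u + v + w‖) ^ 2 ≥ C * (1 + ‖v‖) / (1 + ‖u‖) := by
  set z := u + v + w with hz
  set Pw := (V₁.orthogonalProjectionOnto w : V) with hPwdef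
  -- projection contracts
  have hcontr : ∀ x : V, ‖(V₁.orthogonalProjectionOnto x : V)‖ ≤ ‖x‖ := by
    intro x
    have h1 : x - (V₁.orthogonalProjectionOnto x : V) ∈ V₁ᗮ :=
      Submodule.sub_starProjection_mem_orthogonal x
    have h2 : (inner ℝ ((V₁.orthogonalProjectionOnto x : V)) (x - (V₁.orthogonalProjectionOnto x : V)) : ℝ) = 0 :=
      h1 _ (V₁.orthogonalProjectionOnto x).2
    have := norm_add_sq_real ((V₁.orthogonalProjectionOnto x : V)) (x - (V₁.orthogonalProjectionOnto x : V))
    rw [h2, add_sub_cancel] at this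
    nlinarith [norm_nonneg (x - (V₁.orthogonalProjectionOnto x : V)), norm_nonneg x,
      norm_nonneg ((V₁.orthogonalProjectionOnto x : V))]
  have hcontr' : ∀ x : V, ‖x - (V₁.orthogonalProjectionOnto x : V)‖ ≤ ‖x‖ := by
    intro x
    have h1 : x - (V₁.orthogonalProjectionOnto x : V) ∈ V₁ᗮ :=
      Submodule.sub_starProjection_mem_orthogonal x
    have h2 : (inner ℝ ((V₁.orthogonalProjectionOnto x : V)) (x - (V₁.orthogonalProjectionOnto x : V)) : ℝ) = 0 :=
      h1 _ (V₁.orthogonalProjectionOnto x).2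
    have := norm_add_sq_real ((V₁.orthogonalProjectionOnto x : V)) (x - (V₁.orthogonalProjectionOnto x : V))
    rw [h2, add_sub_cancel] at this
    nlinarith [norm_nonneg (x - (V₁.orthogonalProjectionOnto x : V)), norm_nonneg x,
      norm_nonneg ((V₁.orthogonalProjectionOnto x : V))]
  -- Pv = 0
  have hvperp : v ∈ V₁ᗮ := by
    intro x hx
    exact horth x hx v hv
  have hPv : V₁.orthogonalProjectionOnto v = 0 :=
    Submodule.orthogonalProjectionOnto_apply_of_mem_orthogonal hvperp
  have hPu : (V₁.orthogonalProjectionOnto u : V) = u := by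
    exact Submodule.starProjection_eq_self_iff.2 hu
  have hPz : (V₁.orthogonalProjectionOnto z : V) = u + Pw := by
    rw [hz, map_add, map_add, hPv]; push_cast [hPu]; simp [hPwdef]
  have f1 : ‖u + Pw‖ ≤ ‖z‖ := by rw [← hPz]; exact hcontr z
  have f2 : ‖v + (w - Pw)‖ ≤ ‖z‖ := by
    have : z - (V₁.orthogonalProjectionOnto z : V) = v + (w - Pw) := by
      rw [hPz, hz]; abel
    rw [← this]; exact hcontr' z
  have f3 : ‖w - Pw‖ ≤ ‖w‖ := hcontr' w
  have f4 : ‖v‖ ≤ ‖z‖ + ‖w‖ := by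
    calc ‖v‖ = ‖(v + (w - Pw)) - (w - Pw)‖ := by congr 1; abel
    _ ≤ ‖v + (w - Pw)‖ + ‖w - Pw‖ := norm_sub_le _ _
    _ ≤ ‖z‖ + ‖w‖ := add_le_add f2 f3
  have f5 : ‖Pw‖ ≤ ‖z‖ + ‖u‖ := by
    calc ‖Pw‖ = ‖(u + Pw) - u‖ := by congr 1; abel
    _ ≤ ‖u + Pw‖ + ‖u‖ := norm_sub_le _ _
    _ ≤ ‖z‖ + ‖u‖ := by linarith
  have hu0 : (0:ℝ) ≤ ‖u‖ := norm_nonneg u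
  have hz0 : (0:ℝ) ≤ ‖z‖ := norm_nonneg z
  have hw0 : (0:ℝ) ≤ ‖w‖ := norm_nonneg w
  rw [ge_iff_le, div_le_iff₀ (by linarith)]
  nlinarith [norm_nonneg v, sq_nonneg ‖z‖, mul_nonneg hu0 (sq_nonneg (1 + ‖z‖)),
    mul_le_mul_of_nonneg_left f4 hC0.le]
end

section
/- Let h be a real n×n matrix (n ≥ 2) with trace zero, and let |T| denote the operator norm on matrices. Then |exp(h)| ≥ exp(|h|/(n−1)), where here h is assumed diagonalizable over ℝ (e.g., symmetric) so that |h| equals the maximal absolute value of an eigenvalue and |exp(h)| equals exp of the maximal eigenvalue. -/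
/-- For a symmetric traceless real `n × n` matrix `h` (`n ≥ 2`), the operator norm of
`exp h` equals `exp` of the maximal eigenvalue, and the operator norm of `h` is the
maximal absolute value of an eigenvalue; the claim `|exp h| ≥ exp(|h|/(n-1))` thus reads
`exp (max_i λ_i) ≥ exp ((max_i |λ_i|)/(n-1))`. -/
theorem opNorm_exp_ge (n : ℕ) (hn : 2 ≤ n)
    (h : Matrix (Fin n) (Fin n) ℝ) (hherm : h.IsHermitian) (htr : h.trace = 0) :
    Real.exp (⨆ i, hherm.eigenvalues i) ≥
      Real.exp ((⨆ i, |hherm.eigenvalues i|) / (n - 1)) := by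
  have hnpos : (0 : ℕ) < n := by omega
  haveI : Nonempty (Fin n) := ⟨⟨0, hnpos⟩⟩
  set lam := hherm.eigenvalues with hlam
  -- sum of eigenvalues equals trace, which is 0
  have hsum : ∑ i, lam i = 0 := by
    have hst := hherm.spectral_theorem
    have : h.trace = ∑ i, lam i := by
      rw [hst, Unitary.conjStarAlgAut_apply, Matrix.trace_mul_cycle]
      have hu : (star (hherm.eigenvectorUnitary : Matrix (Fin n) (Fin n) ℝ)) *
          (hherm.eigenvectorUnitary : Matrix (Fin n) (Fin n) ℝ) = 1 :=
        hherm.eigenvectorUnitary.2.1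
      rw [hu, Matrix.one_mul, Matrix.trace_diagonal]
      simp [RCLike.ofReal, hlam]
    rw [htr] at this
    exact this.symm
  set M := ⨆ i, lam i with hM
  have hle : ∀ i, lam i ≤ M := fun i => le_ciSup (Finite.bddAbove_range lam) i
  have hM0 : 0 ≤ M := by
    by_contra hneg
    push_neg at hneg
    have : ∑ i, lam i < ∑ _i : Fin n, (0 : ℝ) :=
      Finset.sum_lt_sum_of_nonempty (by simp [Finset.univ_nonempty])
        (fun i _ => lt_of_le_of_lt (hle i) hneg)
    simp [hsum] at this
  have hn1 : (1 : ℝ) ≤ (n : ℝ) - 1 := by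
    have : (2 : ℝ) ≤ (n : ℝ) := by exact_mod_cast hn
    linarith
  have hkey : ∀ i, |lam i| ≤ ((n : ℝ) - 1) * M := by
    intro i
    rw [abs_le]
    constructor
    · -- -( (n-1)M ) ≤ lam i, i.e. -lam i ≤ (n-1) M
      have hsplit : lam i + ∑ j ∈ Finset.univ.erase i, lam j = 0 := by
        rw [Finset.add_sum_erase Finset.univ lam (Finset.mem_univ i)]
        exact hsum
      have hbound : ∑ j ∈ Finset.univ.erase i, lam j ≤ ((n : ℝ) - 1) * M := by
        calc ∑ j ∈ Finset.univ.erase i, lam j ≤ ∑ _j ∈ Finset.univ.erase i, M :=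
              Finset.sum_le_sum (fun j _ => hle j)
          _ = ((n : ℝ) - 1) * M := by
              rw [Finset.sum_const, Finset.card_erase_of_mem (Finset.mem_univ i),
                Finset.card_univ, Fintype.card_fin, nsmul_eq_mul, Nat.cast_sub hnpos]
              norm_num
      linarith
    · exact le_trans (hle i) (le_mul_of_one_le_left hM0 hn1)
  have habs : (⨆ i, |lam i|) ≤ ((n : ℝ) - 1) * M := ciSup_le hkey
  rw [ge_iff_le, Real.exp_le_exp, div_le_iff₀ (by linarith : (0:ℝ) < (n:ℝ) - 1)]
  calc (⨆ i, |lam i|) ≤ ((n : ℝ) - 1) * M := habs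
    _ = M * ((n : ℝ) - 1) := mul_comm _ _
end

section
/- Let ν₁,...,ν_m be distinct real numbers and p₁,...,p_m nonzero complex polynomials. If there exist constants C, r such that |Σ_j e^{μ_j t} p_j(t)| ≤ C(1+|t|)^r for all t ∈ ℝ, where μ_j ∈ ℂ are distinct, then every μ_j is purely imaginary and deg p_j ≤ r. -/
open Complex Polynomial Filter

/-- shift-and-subtract operator on polynomials -/
noncomputable def shiftPoly (μ0 : ℂ) (h : ℝ) (c : ℂ) (p : ℂ[X]) : ℂ[X] :=
  Complex.exp (μ0 * h) • p.comp (X + C (h : ℂ)) - c • p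

lemma shiftPoly_coeff (μ0 : ℂ) (h : ℝ) (c : ℂ) (p : ℂ[X]) (i : ℕ) :
    (shiftPoly μ0 h c p).coeff i
      = Complex.exp (μ0 * h) * (p.comp (X + C (h : ℂ))).coeff i - c * p.coeff i := by
  simp [shiftPoly, coeff_smul, smul_eq_mul]

lemma shiftPoly_eval (μ0 : ℂ) (h : ℝ) (c : ℂ) (p : ℂ[X]) (t : ℝ) :
    (shiftPoly μ0 h c p).eval (t : ℂ)
      = Complex.exp (μ0 * h) * p.eval ((t : ℂ) + h) - c * p.eval (t : ℂ) := by
  simp [shiftPoly, eval_comp, smul_eq_mul]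

lemma comp_X_add_C_natDegree (p : ℂ[X]) (a : ℂ) :
    (p.comp (X + C a)).natDegree = p.natDegree := by
  rw [natDegree_comp, natDegree_X_add_C, mul_one]

lemma comp_X_add_C_coeff_top (p : ℂ[X]) (a : ℂ) :
    (p.comp (X + C a)).coeff p.natDegree = p.coeff p.natDegree := by
  have h1 : (p.comp (X + C a)).natDegree = p.natDegree := comp_X_add_C_natDegree p a
  have h2 : (p.comp (X + C a)).leadingCoeff = p.leadingCoeff := by
    rw [leadingCoeff_comp (by rw [natDegree_X_add_C]; norm_num)]
    simp [leadingCoeff_X_add_C]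
  rw [← h1, coeff_natDegree, h2, leadingCoeff, h1]

lemma comp_X_add_C_coeff_zero (p : ℂ[X]) (a : ℂ) {i : ℕ} (hi : p.natDegree < i) :
    (p.comp (X + C a)).coeff i = 0 := by
  apply coeff_eq_zero_of_natDegree_lt
  rwa [comp_X_add_C_natDegree]

lemma shiftPoly_natDegree_le (μ0 : ℂ) (h : ℝ) (c : ℂ) (p : ℂ[X]) :
    (shiftPoly μ0 h c p).natDegree ≤ p.natDegree := by
  rw [natDegree_le_iff_coeff_eq_zero]
  intro N hN
  rw [shiftPoly_coeff, comp_X_add_C_coeff_zero p _ hN,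
    coeff_eq_zero_of_natDegree_lt hN]
  ring

/-- the "other terms": degree preserved, nonzero preserved -/
lemma shiftPoly_ne (μ0 : ℂ) (h : ℝ) (c : ℂ) (p : ℂ[X])
    (hc : c ≠ Complex.exp (μ0 * h)) :
    (shiftPoly μ0 h c p).natDegree = p.natDegree ∧ (p ≠ 0 → shiftPoly μ0 h c p ≠ 0) := by
  by_cases hp : p = 0
  · simp [hp, shiftPoly]
  · have hcoeff : (shiftPoly μ0 h c p).coeff p.natDegree
        = (Complex.exp (μ0 * h) - c) * p.coeff p.natDegree := by
      rw [shiftPoly_coeff, comp_X_add_C_coeff_top]; ring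
    have hne : (shiftPoly μ0 h c p).coeff p.natDegree ≠ 0 := by
      rw [hcoeff]
      exact mul_ne_zero (sub_ne_zero.mpr (Ne.symm hc)) (by rwa [← leadingCoeff, leadingCoeff_ne_zero])
    refine ⟨le_antisymm (shiftPoly_natDegree_le _ _ _ _) (le_natDegree_of_ne_zero hne), ?_⟩
    intro _ h0
    rw [h0] at hne; simp at hne

/-- the "self" term: degree drops -/
lemma shiftPoly_self (μ0 : ℂ) (h : ℝ) (p : ℂ[X]) :
    ∀ N, p.natDegree ≤ N → shiftPoly μ0 h (Complex.exp (μ0 * h)) p = 0 ∨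
      (shiftPoly μ0 h (Complex.exp (μ0 * h)) p).natDegree + 1 ≤ N := by
  intro N hN
  by_cases hz : shiftPoly μ0 h (Complex.exp (μ0 * h)) p = 0
  · exact Or.inl hz
  right
  rcases Nat.eq_zero_or_pos N with h0 | h0
  · exfalso
    apply hz
    have : p.natDegree = 0 := le_antisymm (h0 ▸ hN) (Nat.zero_le _)
    obtain ⟨a, rfl⟩ := natDegree_eq_zero.mp this
    simp [shiftPoly]
  · have : (shiftPoly μ0 h (Complex.exp (μ0 * h)) p).natDegree ≤ N - 1 := by
      rw [natDegree_le_iff_coeff_eq_zero]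
      intro M hM
      have hM' : N ≤ M := by omega
      rcases lt_or_eq_of_le (hN.trans hM') with hlt | heq
      · rw [shiftPoly_coeff, comp_X_add_C_coeff_zero p _ hlt, coeff_eq_zero_of_natDegree_lt hlt]
        ring
      · rw [shiftPoly_coeff, ← heq, comp_X_add_C_coeff_top]; ring
    omega

section
variable {m : ℕ}

lemma sum_shift_eval (μ : Fin m → ℂ) (h : ℝ) (c : ℂ) (p : Fin m → ℂ[X])
    (s : Finset (Fin m)) (t : ℝ) :
    ∑ l ∈ s, Complex.exp (μ l * t) * (shiftPoly (μ l) h c (p l)).eval (t : ℂ)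
      = (∑ l ∈ s, Complex.exp (μ l * (t + h : ℝ)) * (p l).eval ((t + h : ℝ) : ℂ))
        - c * ∑ l ∈ s, Complex.exp (μ l * t) * (p l).eval (t : ℂ) := by
  rw [Finset.mul_sum, ← Finset.sum_sub_distrib]
  apply Finset.sum_congr rfl
  intro l _
  rw [shiftPoly_eval]
  push_cast
  rw [mul_add, Complex.exp_add]
  ring

lemma one_add_abs_shift (t h : ℝ) : 1 + |t + h| ≤ (1 + |h|) * (1 + |t|) := by
  have := abs_add_le t h
  have h1 := abs_nonneg t
  have h2 := abs_nonneg h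
  nlinarith

lemma rpow_shift_bound {r : ℝ} (hr : 0 ≤ r) (t h : ℝ) :
    (1 + |t + h|) ^ r ≤ (1 + |h|) ^ r * (1 + |t|) ^ r := by
  rw [← Real.mul_rpow (by positivity) (by positivity)]
  exact Real.rpow_le_rpow (by positivity) (one_add_abs_shift t h) hr

end
lemma kill {m : ℕ} (μ : Fin m → ℂ) (h : ℝ)
    (hE : Function.Injective fun k : Fin m => Complex.exp (μ k * h))
    (r : ℝ) (hr : 0 ≤ r) (s : Finset (Fin m)) (k : Fin m) (hk : k ∉ s) :
    ∀ n : ℕ, ∀ p : Fin m → ℂ[X], ∀ C : ℝ, 0 < C →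
    (p k).natDegree ≤ n →
    (∀ t : ℝ, ‖∑ l ∈ insert k s, Complex.exp (μ l * t) * (p l).eval (t : ℂ)‖
        ≤ C * (1 + |t|) ^ r) →
    ∃ (q : Fin m → ℂ[X]) (C' : ℝ), 0 < C' ∧
      (∀ l ∈ s, (q l).natDegree = (p l).natDegree ∧ (p l ≠ 0 → q l ≠ 0)) ∧
      (∀ t : ℝ, ‖∑ l ∈ s, Complex.exp (μ l * t) * (q l).eval (t : ℂ)‖
        ≤ C' * (1 + |t|) ^ r) := by
  intro n
  induction n with
  | zero =>
    intro p C hC hdeg hbd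
    set c := Complex.exp (μ k * h) with hc
    set p' := fun l => shiftPoly (μ l) h c (p l) with hp'
    have hk0 : p' k = 0 := by
      rcases shiftPoly_self (μ k) h (p k) 0 hdeg with h0 | h0
      · exact h0
      · omega
    have hC1 : (0:ℝ) < C * ((1 + |h|) ^ r + ‖c‖) := by
      have : (0:ℝ) < (1 + |h|) ^ r := by positivity
      have : (0:ℝ) < ‖c‖ := by
        simp [hc, Complex.norm_exp, Real.exp_pos]
      positivity
    refine ⟨p', C * ((1 + |h|) ^ r + ‖c‖), hC1, ?_, ?_⟩
    · intro l hl
      have hlk : l ≠ k := fun hEq => hk (hEq ▸ hl)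
      have hcne : c ≠ Complex.exp (μ l * h) := by
        intro hEq
        exact hlk (hE hEq.symm)
      exact shiftPoly_ne (μ l) h c (p l) hcne
    · intro t
      have hsum : ∑ l ∈ s, Complex.exp (μ l * t) * (p' l).eval (t : ℂ)
          = ∑ l ∈ insert k s, Complex.exp (μ l * t) * (p' l).eval (t : ℂ) := by
        rw [Finset.sum_insert hk, hk0]
        simp
      rw [hsum, sum_shift_eval]
      calc ‖_ - c * _‖ ≤ ‖(∑ l ∈ insert k s, Complex.exp (μ l * ((t + h : ℝ) : ℂ)) * (p l).eval ((t + h : ℝ) : ℂ))‖ + ‖c‖ * ‖∑ l ∈ insert k s, Complex.exp (μ l * t) * (p l).eval (t : ℂ)‖ := by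
              rw [← norm_mul]; exact norm_sub_le _ _
        _ ≤ C * (1 + |t + h|) ^ r + ‖c‖ * (C * (1 + |t|) ^ r) := by
              gcongr
              all_goals first | exact norm_nonneg _ | exact hbd _
        _ ≤ C * ((1 + |h|) ^ r * (1 + |t|) ^ r) + ‖c‖ * (C * (1 + |t|) ^ r) := by
              gcongr
              exact rpow_shift_bound hr t h
        _ = C * ((1 + |h|) ^ r + ‖c‖) * (1 + |t|) ^ r := by
              ring
  | succ n ih =>
    intro p C hC hdeg hbd
    set c := Complex.exp (μ k * h) with hc
    set p' := fun l => shiftPoly (μ l) h c (p l) with hp'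
    have hdeg' : (p' k).natDegree ≤ n := by
      rcases shiftPoly_self (μ k) h (p k) (n+1) hdeg with h0 | h0
      · simp [hp', hc, h0]
      · have h1 : (shiftPoly (μ k) h c (p k)).natDegree + 1 ≤ n + 1 := by rw [hc]; exact h0
        simp only [hp']
        omega
    have hC1 : (0:ℝ) < C * ((1 + |h|) ^ r + ‖c‖) := by
      have : (0:ℝ) < (1 + |h|) ^ r := by positivity
      have : (0:ℝ) < ‖c‖ := by
        simp [hc, Complex.norm_exp, Real.exp_pos]
      positivity
    have hbd' : ∀ t : ℝ, ‖∑ l ∈ insert k s, Complex.exp (μ l * t) * (p' l).eval (t : ℂ)‖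
        ≤ C * ((1 + |h|) ^ r + ‖c‖) * (1 + |t|) ^ r := by
      intro t
      rw [sum_shift_eval]
      calc ‖_ - c * _‖ ≤ ‖(∑ l ∈ insert k s, Complex.exp (μ l * ((t + h : ℝ) : ℂ)) * (p l).eval ((t + h : ℝ) : ℂ))‖ + ‖c‖ * ‖∑ l ∈ insert k s, Complex.exp (μ l * t) * (p l).eval (t : ℂ)‖ := by
              rw [← norm_mul]; exact norm_sub_le _ _
        _ ≤ C * (1 + |t + h|) ^ r + ‖c‖ * (C * (1 + |t|) ^ r) := by
              gcongr
              all_goals first | exact norm_nonneg _ | exact hbd _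
        _ ≤ C * ((1 + |h|) ^ r * (1 + |t|) ^ r) + ‖c‖ * (C * (1 + |t|) ^ r) := by
              gcongr
              exact rpow_shift_bound hr t h
        _ = C * ((1 + |h|) ^ r + ‖c‖) * (1 + |t|) ^ r := by
              ring
    obtain ⟨q, C', hC', hq, hqbd⟩ := ih p' _ hC1 hdeg' hbd'
    refine ⟨q, C', hC', ?_, hqbd⟩
    intro l hl
    have hlk : l ≠ k := fun hEq => hk (hEq ▸ hl)
    have hcne : c ≠ Complex.exp (μ l * h) := by
      intro hEq
      exact hlk (hE hEq.symm)
    obtain ⟨hd1, hz1⟩ := shiftPoly_ne (μ l) h c (p l) hcne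
    obtain ⟨hd2, hz2⟩ := hq l hl
    exact ⟨hd2.trans hd1, fun hne => hz2 (hz1 hne)⟩
lemma isolate {m : ℕ} (μ : Fin m → ℂ) (h : ℝ)
    (hE : Function.Injective fun k : Fin m => Complex.exp (μ k * h))
    (r : ℝ) (hr : 0 ≤ r) (j : Fin m) :
    ∀ s : Finset (Fin m), j ∉ s → ∀ p : Fin m → ℂ[X], ∀ C : ℝ, 0 < C → p j ≠ 0 →
    (∀ t : ℝ, ‖∑ l ∈ insert j s, Complex.exp (μ l * t) * (p l).eval (t : ℂ)‖
        ≤ C * (1 + |t|) ^ r) →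
    ∃ (q : ℂ[X]) (C' : ℝ), 0 < C' ∧ q ≠ 0 ∧ q.natDegree = (p j).natDegree ∧
      ∀ t : ℝ, ‖Complex.exp (μ j * t) * q.eval (t : ℂ)‖ ≤ C' * (1 + |t|) ^ r := by
  intro s
  induction s using Finset.induction_on with
  | empty =>
    intro _ p C hC hpj hbd
    refine ⟨p j, C, hC, hpj, rfl, ?_⟩
    intro t
    have := hbd t
    simpa using this
  | @insert k s' hk' ih =>
    intro hj p C hC hpj hbd
    have hjk : j ≠ k := by
      intro hEq; exact hj (hEq ▸ Finset.mem_insert_self k s')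
    have hjs : j ∉ s' := fun hmem => hj (Finset.mem_insert_of_mem hmem)
    have hkj : k ∉ insert j s' := by
      simp only [Finset.mem_insert]
      push_neg
      exact ⟨fun hEq => hjk hEq.symm, hk'⟩
    have hbd2 : ∀ t : ℝ, ‖∑ l ∈ insert k (insert j s'), Complex.exp (μ l * t) * (p l).eval (t : ℂ)‖
        ≤ C * (1 + |t|) ^ r := by
      intro t
      rw [Finset.insert_comm]
      exact hbd t
    obtain ⟨q', C₁, hC₁, hq', hbd'⟩ :=
      kill μ h hE r hr (insert j s') k hkj (p k).natDegree p C hC le_rfl hbd2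
    obtain ⟨hdj, hzj⟩ := hq' j (Finset.mem_insert_self j s')
    obtain ⟨q, C', hC', hq0, hqd, hqbd⟩ := ih hjs q' C₁ hC₁ (hzj hpj) hbd'
    exact ⟨q, C', hC', hq0, hqd.trans hdj, hqbd⟩
lemma exists_good_h {m : ℕ} (μ : Fin m → ℂ) (hμ : Function.Injective μ) :
    ∃ h : ℝ, Function.Injective fun k : Fin m => Complex.exp (μ k * h) := by
  have hcnt : (⋃ (j : Fin m) (k : Fin m) (n : ℤ),
      {h : ℝ | μ j ≠ μ k ∧ (μ j - μ k) * (h : ℂ) = n * (2 * Real.pi * Complex.I)}).Countable := by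
    apply Set.countable_iUnion; intro j
    apply Set.countable_iUnion; intro k
    apply Set.countable_iUnion; intro n
    apply Set.Subsingleton.countable
    rintro x ⟨hne, hx⟩ y ⟨-, hy⟩
    have hd : μ j - μ k ≠ 0 := sub_ne_zero.mpr hne
    have : (x : ℂ) = (y : ℂ) := by
      have := hx.trans hy.symm
      exact mul_left_cancel₀ hd this
    exact_mod_cast this
  have : ¬ (Set.univ : Set ℝ).Countable := Cardinal.not_countable_real
  obtain ⟨h, hh⟩ : ∃ h : ℝ, h ∉ ⋃ (j : Fin m) (k : Fin m) (n : ℤ),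
      {h : ℝ | μ j ≠ μ k ∧ (μ j - μ k) * (h : ℂ) = n * (2 * Real.pi * Complex.I)} := by
    by_contra hcon
    push_neg at hcon
    exact this (Set.Countable.mono (fun x _ => hcon x) hcnt)
  refine ⟨h, ?_⟩
  intro j k hjk
  by_contra hne
  simp only at hjk
  obtain ⟨n, hn⟩ := Complex.exp_eq_exp_iff_exists_int.mp hjk
  apply hh
  refine Set.mem_iUnion.mpr ⟨j, Set.mem_iUnion.mpr ⟨k, Set.mem_iUnion.mpr ⟨n, ?_⟩⟩⟩
  refine ⟨fun hEq => hne (hμ hEq), ?_⟩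
  rw [sub_mul]
  rw [hn]
  push_cast
  ring

/-- eventual lower bound for a nonzero complex polynomial along the positive reals -/
lemma eval_lower (q : Polynomial ℂ) (hq : q ≠ 0) :
    ∃ T : ℝ, 1 ≤ T ∧ ∀ t : ℝ, T ≤ t →
      ‖q.leadingCoeff‖ / 2 * t ^ q.natDegree ≤ ‖q.eval (t : ℂ)‖ := by
  set d := q.natDegree with hd
  set c := ‖q.leadingCoeff‖ with hc
  have hcpos : 0 < c := by
    rw [hc, norm_pos_iff]
    exact Polynomial.leadingCoeff_ne_zero.mpr hq
  set S := ∑ i ∈ Finset.range d, ‖q.coeff i‖ with hS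
  have hSnn : 0 ≤ S := Finset.sum_nonneg fun i _ => norm_nonneg _
  have hT1 : (1:ℝ) ≤ 1 + 2 * S / c := by
    have := div_nonneg (by linarith : (0:ℝ) ≤ 2 * S) hcpos.le
    linarith
  refine ⟨1 + 2 * S / c, hT1, ?_⟩
  intro t ht
  have ht1 : (1:ℝ) ≤ t := le_trans hT1 ht
  have ht0 : (0:ℝ) < t := lt_of_lt_of_le one_pos ht1
  have heval : q.eval (t : ℂ)
      = (∑ i ∈ Finset.range d, q.coeff i * (t : ℂ) ^ i) + q.coeff d * (t : ℂ) ^ d := by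
    rw [Polynomial.eval_eq_sum_range, Finset.sum_range_succ]
  have hnorm_top : ‖q.coeff d * (t : ℂ) ^ d‖ = c * t ^ d := by
    rw [norm_mul, norm_pow, Complex.norm_real, Real.norm_eq_abs, abs_of_pos ht0]
    rfl
  have hrest : ‖∑ i ∈ Finset.range d, q.coeff i * (t : ℂ) ^ i‖ ≤ S * t ^ (d - 1) := by
    rcases Nat.eq_zero_or_pos d with h0 | h0
    · simp [h0, hS]
    calc ‖∑ i ∈ Finset.range d, q.coeff i * (t : ℂ) ^ i‖
        ≤ ∑ i ∈ Finset.range d, ‖q.coeff i * (t : ℂ) ^ i‖ := norm_sum_le _ _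
      _ ≤ ∑ i ∈ Finset.range d, ‖q.coeff i‖ * t ^ (d - 1) := by
          apply Finset.sum_le_sum
          intro i hi
          rw [norm_mul, norm_pow, Complex.norm_real, Real.norm_eq_abs, abs_of_pos ht0]
          apply mul_le_mul_of_nonneg_left _ (norm_nonneg _)
          exact pow_le_pow_right₀ ht1 (by have := Finset.mem_range.mp hi; omega)
      _ = S * t ^ (d - 1) := by rw [← Finset.sum_mul]
  have hSt : S * t ^ (d - 1) ≤ c / 2 * t ^ d := by
    rcases Nat.eq_zero_or_pos d with h0 | h0
    · simp only [h0, Finset.range_zero, Finset.sum_empty] at hS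
      simp [hS, h0]
      positivity
    · have hdd : d = (d - 1) + 1 := by omega
      have hpow : t ^ d = t ^ (d - 1) * t := by
        rw [← pow_succ, ← hdd]
      have : c / 2 * t ^ d = (c / 2 * t) * t ^ (d - 1) := by
        rw [hpow]; ring
      rw [this]
      apply mul_le_mul_of_nonneg_right _ (by positivity)
      have : 2 * S / c ≤ t - 1 := by linarith
      have h2 : 2 * S ≤ c * (t - 1) := by
        rw [div_le_iff₀ hcpos] at this
        linarith
      nlinarith
  calc c / 2 * t ^ d = c * t ^ d - c / 2 * t ^ d := by ring
    _ ≤ ‖q.coeff d * (t : ℂ) ^ d‖ - ‖∑ i ∈ Finset.range d, q.coeff i * (t : ℂ) ^ i‖ := by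
        rw [hnorm_top]
        have := hrest.trans hSt
        linarith
    _ ≤ ‖q.eval (t : ℂ)‖ := by
        rw [heval]
        have := norm_sub_norm_le (q.coeff d * (t : ℂ) ^ d)
          (-(∑ i ∈ Finset.range d, q.coeff i * (t : ℂ) ^ i))
        simp only [norm_neg] at this
        calc _ ≤ ‖q.coeff d * (t:ℂ)^d - -(∑ i ∈ Finset.range d, q.coeff i * (t:ℂ)^i)‖ := this
          _ = _ := by rw [sub_neg_eq_add, add_comm]
lemma re_nonpos_of_bound (a : ℝ) (q : Polynomial ℂ) (hq : q ≠ 0) (C' r : ℝ)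
    (hC' : 0 < C') (hr : 0 ≤ r)
    (hbd : ∀ t : ℝ, Real.exp (a * t) * ‖q.eval (t : ℂ)‖ ≤ C' * (1 + |t|) ^ r) :
    a ≤ 0 := by
  by_contra hcon
  push_neg at hcon
  obtain ⟨T, hT1, hT⟩ := eval_lower q hq
  set c := ‖q.leadingCoeff‖ with hc
  have hcpos : 0 < c := by
    rw [hc, norm_pos_iff]; exact Polynomial.leadingCoeff_ne_zero.mpr hq
  set K := C' * 2 ^ r / (c / 2) with hK
  have H : Filter.Tendsto (fun t : ℝ => Real.exp (a * t) / t ^ r) Filter.atTop Filter.atTop :=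
    tendsto_exp_mul_div_rpow_atTop r a hcon
  have hev : ∀ᶠ t : ℝ in Filter.atTop, K < Real.exp (a * t) / t ^ r :=
    H.eventually_gt_atTop K
  obtain ⟨t, ⟨htK, hTt⟩, ht1⟩ := ((hev.and (Filter.eventually_ge_atTop T)).and
    (Filter.eventually_ge_atTop 1)).exists
  have ht0 : (0:ℝ) < t := lt_of_lt_of_le one_pos ht1
  have h1 : Real.exp (a * t) * (c / 2 * t ^ q.natDegree) ≤ C' * (1 + |t|) ^ r := by
    calc Real.exp (a * t) * (c / 2 * t ^ q.natDegree)
        ≤ Real.exp (a * t) * ‖q.eval (t : ℂ)‖ := by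
          apply mul_le_mul_of_nonneg_left (hT t hTt) (Real.exp_pos _).le
      _ ≤ C' * (1 + |t|) ^ r := hbd t
  have h2 : (1 + |t|) ^ r ≤ 2 ^ r * t ^ r := by
    rw [← Real.mul_rpow (by norm_num) ht0.le]
    apply Real.rpow_le_rpow (by positivity) _ hr
    rw [abs_of_pos ht0]; linarith
  have h3 : (1:ℝ) ≤ t ^ q.natDegree := one_le_pow₀ ht1
  have h4 : Real.exp (a * t) * (c / 2) ≤ C' * (2 ^ r * t ^ r) := by
    nlinarith [Real.exp_pos (a * t), (Real.exp_pos (a*t)).le,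
      mul_le_mul_of_nonneg_left h3 (mul_pos (Real.exp_pos (a*t)) (by positivity : (0:ℝ) < c/2)).le]
  have htr : (0:ℝ) < t ^ r := Real.rpow_pos_of_pos ht0 r
  have h5 : Real.exp (a * t) / t ^ r ≤ K := by
    rw [hK, div_le_div_iff₀ htr (by positivity)]
    calc Real.exp (a * t) * (c / 2) ≤ C' * (2 ^ r * t ^ r) := h4
      _ = C' * 2 ^ r * t ^ r := by ring
  exact absurd h5 (not_le.mpr htK)

lemma natDegree_le_of_bound (q : Polynomial ℂ) (hq : q ≠ 0) (C' r : ℝ)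
    (hC' : 0 < C') (hr : 0 ≤ r)
    (hbd : ∀ t : ℝ, ‖q.eval (t : ℂ)‖ ≤ C' * (1 + |t|) ^ r) :
    (q.natDegree : ℝ) ≤ r := by
  by_contra hcon
  push_neg at hcon
  obtain ⟨T, hT1, hT⟩ := eval_lower q hq
  set c := ‖q.leadingCoeff‖ with hc
  have hcpos : 0 < c := by
    rw [hc, norm_pos_iff]; exact Polynomial.leadingCoeff_ne_zero.mpr hq
  set K := C' * 2 ^ r / (c / 2) with hK
  have H : Filter.Tendsto (fun t : ℝ => t ^ ((q.natDegree : ℝ) - r)) Filter.atTop Filter.atTop :=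
    tendsto_rpow_atTop (by linarith)
  obtain ⟨t, htK, hTt⟩ := ((H.eventually_gt_atTop K).and
    (Filter.eventually_ge_atTop (max T 1))).exists
  have hTt' : T ≤ t := le_trans (le_max_left _ _) hTt
  have ht1 : (1:ℝ) ≤ t := le_trans (le_max_right _ _) hTt
  have ht0 : (0:ℝ) < t := lt_of_lt_of_le one_pos ht1
  have h1 : c / 2 * t ^ q.natDegree ≤ C' * (1 + |t|) ^ r :=
    le_trans (hT t hTt') (hbd t)
  have h2 : (1 + |t|) ^ r ≤ 2 ^ r * t ^ r := by
    rw [← Real.mul_rpow (by norm_num) ht0.le]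
    apply Real.rpow_le_rpow (by positivity) _ hr
    rw [abs_of_pos ht0]; linarith
  have htr : (0:ℝ) < t ^ r := Real.rpow_pos_of_pos ht0 r
  have h3 : t ^ ((q.natDegree : ℝ) - r) ≤ K := by
    rw [Real.rpow_sub ht0, hK, div_le_div_iff₀ htr (by positivity),
      Real.rpow_natCast]
    calc t ^ q.natDegree * (c / 2) = c / 2 * t ^ q.natDegree := by ring
      _ ≤ C' * (1 + |t|) ^ r := h1
      _ ≤ C' * (2 ^ r * t ^ r) := by
          apply mul_le_mul_of_nonneg_left h2 hC'.le
      _ = C' * 2 ^ r * t ^ r := by ring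
  exact absurd h3 (not_le.mpr htK)

lemma single_term (μ0 : ℂ) (q : Polynomial ℂ) (hq : q ≠ 0) (C' r : ℝ)
    (hC' : 0 < C') (hr : 0 ≤ r)
    (hbd : ∀ t : ℝ, ‖Complex.exp (μ0 * t) * q.eval (t : ℂ)‖ ≤ C' * (1 + |t|) ^ r) :
    μ0.re = 0 ∧ (q.natDegree : ℝ) ≤ r := by
  have key : ∀ t : ℝ, Real.exp (μ0.re * t) * ‖q.eval (t : ℂ)‖ ≤ C' * (1 + |t|) ^ r := by
    intro t
    have := hbd t
    rwa [norm_mul, Complex.norm_exp,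
      Complex.mul_re, Complex.ofReal_re, Complex.ofReal_im, mul_zero, sub_zero] at this
  have ha1 : μ0.re ≤ 0 := re_nonpos_of_bound μ0.re q hq C' r hC' hr key
  -- negative direction
  set q' := q.comp (-Polynomial.X : Polynomial ℂ) with hq'
  have hq'ne : q' ≠ 0 := by
    intro h0
    have : q'.comp (-Polynomial.X : Polynomial ℂ) = q := by
      rw [hq', Polynomial.comp_assoc]
      simp
    rw [h0] at this
    simp at this
    exact hq this.symm
  have hq'eval : ∀ t : ℝ, q'.eval (t : ℂ) = q.eval ((-t : ℝ) : ℂ) := by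
    intro t
    rw [hq', Polynomial.eval_comp]
    push_cast
    simp
  have key2 : ∀ t : ℝ, Real.exp ((-μ0.re) * t) * ‖q'.eval (t : ℂ)‖ ≤ C' * (1 + |t|) ^ r := by
    intro t
    rw [hq'eval]
    have := key (-t)
    rw [abs_neg] at this
    calc Real.exp (-μ0.re * t) * ‖q.eval ((-t : ℝ) : ℂ)‖
        = Real.exp (μ0.re * (-t)) * ‖q.eval ((-t : ℝ) : ℂ)‖ := by ring_nf
      _ ≤ C' * (1 + |t|) ^ r := this
  have ha2 : -μ0.re ≤ 0 := re_nonpos_of_bound (-μ0.re) q' hq'ne C' r hC' hr key2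
  have hre : μ0.re = 0 := le_antisymm ha1 (by linarith)
  refine ⟨hre, ?_⟩
  apply natDegree_le_of_bound q hq C' r hC' hr
  intro t
  have := key t
  rwa [hre, zero_mul, Real.exp_zero, one_mul] at this
theorem expPoly_poly_growth_imaginary (m : ℕ) (μ : Fin m → ℂ) (hμ : Function.Injective μ)
    (p : Fin m → Polynomial ℂ) (hp : ∀ j, p j ≠ 0)
    (F : ℝ → ℂ)
    (hF : ∀ t : ℝ, F t = ∑ j, Complex.exp (μ j * t) * (p j).eval (t : ℂ))
    (C r : ℝ) (hC : 0 < C) (hr : 0 ≤ r)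
    (hbd : ∀ t : ℝ, ‖F t‖ ≤ C * (1 + |t|) ^ r) :
    ∀ j, (μ j).re = 0 ∧ ((p j).natDegree : ℝ) ≤ r := by
  intro j
  obtain ⟨h, hE⟩ := exists_good_h μ hμ
  set s := Finset.univ.erase j with hs
  have hjs : j ∉ s := Finset.notMem_erase j _
  have hins : insert j s = Finset.univ := Finset.insert_erase (Finset.mem_univ j)
  have hbd' : ∀ t : ℝ, ‖∑ l ∈ insert j s, Complex.exp (μ l * t) * (p l).eval (t : ℂ)‖
      ≤ C * (1 + |t|) ^ r := by
    intro t
    rw [hins]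
    have := hbd t
    rw [hF t] at this
    exact this
  obtain ⟨q, C', hC', hq0, hqd, hqbd⟩ :=
    isolate μ h hE r hr j s hjs p C hC (hp j) hbd'
  obtain ⟨h1, h2⟩ := single_term (μ j) q hq0 C' r hC' hr hqbd
  exact ⟨h1, hqd ▸ h2⟩
end

section
/- Let f : ℝ → ℂ be given by f(t) = Σ_{j=1}^m e^{iν_j t} p_j(t) with ν_j distinct reals and p_j polynomials of degree ≤ r. If f is bounded on ℝ then all p_j are constant. -/
open Complex Polynomial Finset

private lemma abs_exp_I_mul (a t : ℝ) :
    ‖Complex.exp (Complex.I * a * t)‖ = 1 := by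
  rw [show (Complex.I * a * t) = ((a * t : ℝ) : ℂ) * Complex.I by push_cast; ring,
    Complex.norm_exp_ofReal_mul_I]

private lemma natDegree_shiftsub {a b : ℂ} (hab : a ≠ b) (s : ℂ)
    (p : Polynomial ℂ) :
    (C a * p.comp (X + C s) - C b * p).natDegree = p.natDegree := by
  rcases eq_or_ne p 0 with rfl | hp
  · simp
  have hd : (p.comp (X + C s)).natDegree = p.natDegree := by
    simp [natDegree_comp]
  have hlc : (p.comp (X + C s)).leadingCoeff = p.leadingCoeff := by
    rw [leadingCoeff_comp (by simp), leadingCoeff_X_add_C, one_pow, mul_one]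
  refine le_antisymm ?_ ?_
  · refine (natDegree_sub_le _ _).trans (max_le ?_ ?_)
    · exact (natDegree_C_mul_le _ _).trans hd.le
    · exact natDegree_C_mul_le _ _
  · apply le_natDegree_of_ne_zero
    have hc1 : (p.comp (X + C s)).coeff p.natDegree = p.leadingCoeff := by
      rw [← hd, coeff_natDegree, hlc]
    simp only [coeff_sub, coeff_C_mul, hc1, coeff_natDegree]
    rw [← sub_mul]
    exact mul_ne_zero (sub_ne_zero.mpr hab) (leadingCoeff_ne_zero.mpr hp)

private lemma weight_shiftsub_lt {a : ℂ} (s : ℂ) {p : Polynomial ℂ} (hp : p ≠ 0) :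
    (if C a * p.comp (X + C s) - C a * p = 0 then 0
      else (C a * p.comp (X + C s) - C a * p).natDegree + 1) < p.natDegree + 1 := by
  set q := C a * p.comp (X + C s) - C a * p with hq
  rcases eq_or_ne q 0 with h0 | h0
  · simp [h0]
  simp only [h0, if_neg, if_false]
  have hd0 : p.natDegree ≠ 0 := by
    intro h
    obtain ⟨c, rfl⟩ := Polynomial.natDegree_eq_zero.mp h
    simp [hq] at h0
  have hd : (p.comp (X + C s)).natDegree = p.natDegree := by simp [natDegree_comp]
  have hlc : (p.comp (X + C s)).leadingCoeff = p.leadingCoeff := by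
    rw [leadingCoeff_comp (by simp), leadingCoeff_X_add_C, one_pow, mul_one]
  have hcomp0 : p.comp (X + C s) ≠ 0 := by
    intro h
    apply hp
    rw [← leadingCoeff_eq_zero, ← hlc, h, leadingCoeff_zero]
  have hdegeq : (p.comp (X + C s)).degree = p.degree := by
    rw [degree_eq_natDegree hcomp0, degree_eq_natDegree hp, hd]
  have hdeg : (p.comp (X + C s) - p).degree < p.degree := by
    rw [← hdegeq]
    exact degree_sub_lt hdegeq hcomp0 hlc
  have hsub0 : p.comp (X + C s) - p ≠ 0 := by
    intro h
    apply h0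
    rw [hq, ← mul_sub, h, mul_zero]
  have : (p.comp (X + C s) - p).natDegree < p.natDegree := by
    exact natDegree_lt_natDegree hsub0 hdeg
  have hqd : q.natDegree ≤ (p.comp (X + C s) - p).natDegree := by
    rw [hq, ← mul_sub]
    exact natDegree_C_mul_le _ _
  omega

private lemma poly_bdd_natDegree_zero {p : Polynomial ℂ} {B : ℝ}
    (h : ∀ t : ℝ, ‖p.eval (t : ℂ)‖ ≤ B) : p.natDegree = 0 := by
  by_contra hd
  have hp0 : p ≠ 0 := fun h0 => hd (by simp [h0])
  have hdeg : 0 < p.degree := by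
    rw [Polynomial.degree_eq_natDegree hp0]
    exact_mod_cast Nat.pos_of_ne_zero hd
  have hz : Filter.Tendsto (fun t : ℝ => ‖(t : ℂ)‖) Filter.atTop Filter.atTop := by
    simpa using Filter.tendsto_abs_atTop_atTop
  have htend := p.tendsto_norm_atTop hdeg hz
  obtain ⟨t, ht⟩ := (htend.eventually_gt_atTop B).exists
  exact absurd (h t)
    (by simpa using ht : B < ‖p.eval (t:ℂ)‖).not_ge

private lemma aux (m : ℕ) (ν : Fin m → ℝ) (hν : Function.Injective ν) (k : Fin m) :
    ∀ n : ℕ, ∀ p : Fin m → Polynomial ℂ, ∀ F : ℝ → ℂ,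
    (∀ t : ℝ, F t = ∑ j, Complex.exp (Complex.I * (ν j) * t) * (p j).eval (t : ℂ)) →
    (∃ B : ℝ, ∀ t : ℝ, ‖F t‖ ≤ B) →
    (∑ j ∈ univ.erase k, (if p j = 0 then 0 else (p j).natDegree + 1)) = n →
    (p k).natDegree = 0 := by
  intro n
  induction n using Nat.strong_induction_on with
  | _ n IH =>
  rintro p F hF ⟨B, hB⟩ hsum
  rcases Nat.eq_zero_or_pos n with rfl | hpos
  · -- base case : all other polynomials vanish
    have hz : ∀ i ∈ univ.erase k, p i = 0 := by
      intro i hi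
      by_contra hpi
      have := Finset.sum_eq_zero_iff.mp hsum i hi
      simp [hpi] at this
    have hFk : ∀ t : ℝ, ‖(p k).eval (t : ℂ)‖ ≤ B := by
      intro t
      have h1 : F t = Complex.exp (Complex.I * ν k * t) * (p k).eval (t : ℂ) := by
        rw [hF t]
        refine Finset.sum_eq_single_of_mem k (mem_univ k) ?_
        intro i _ hik
        rw [hz i (Finset.mem_erase.mpr ⟨hik, mem_univ i⟩)]
        simp
      have := hB t
      rwa [h1, norm_mul, abs_exp_I_mul, one_mul] at this
    exact poly_bdd_natDegree_zero hFk
  · -- inductive step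
    obtain ⟨j, hj, hpj⟩ : ∃ i ∈ univ.erase k, p i ≠ 0 := by
      by_contra h
      push_neg at h
      have : (∑ i ∈ univ.erase k, (if p i = 0 then 0 else (p i).natDegree + 1)) = 0 :=
        Finset.sum_eq_zero (fun i hi => by simp [h i hi])
      omega
    have hjk : j ≠ k := (Finset.mem_erase.mp hj).1
    have hνne : ν k - ν j ≠ 0 := sub_ne_zero.mpr (fun h => hjk (hν h).symm)
    set s : ℝ := Real.pi / (ν k - ν j) with hs
    have hks : ν k * s = ν j * s + Real.pi := by
      rw [hs]
      field_simp
      ring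
    have hab : Complex.exp (Complex.I * ν k * s) ≠ Complex.exp (Complex.I * ν j * s) := by
      have hneg : Complex.exp (Complex.I * ν k * s) = - Complex.exp (Complex.I * ν j * s) := by
        have hcast : (Complex.I * ν k * s) = Complex.I * ν j * s + Real.pi * Complex.I := by
          have := congrArg (fun x : ℝ => (x : ℂ)) hks
          push_cast at this
          linear_combination Complex.I * this
        rw [hcast, Complex.exp_add, Complex.exp_pi_mul_I]
        ring
      rw [hneg]
      intro h
      have h2 : (2 : ℂ) * Complex.exp (Complex.I * ν j * s) = 0 := by linear_combination -h
      simp [Complex.exp_ne_zero] at h2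
    set q : Fin m → Polynomial ℂ := fun i =>
      C (Complex.exp (Complex.I * ν i * s)) * (p i).comp (X + C (s : ℂ))
        - C (Complex.exp (Complex.I * ν j * s)) * p i with hqdef
    set G : ℝ → ℂ := fun t => F (t + s) - Complex.exp (Complex.I * ν j * s) * F t with hGdef
    have hG : ∀ t : ℝ, G t = ∑ i, Complex.exp (Complex.I * (ν i) * t) * (q i).eval (t : ℂ) := by
      intro t
      rw [hGdef]
      simp only [hF, Finset.mul_sum, ← Finset.sum_sub_distrib]
      refine Finset.sum_congr rfl (fun i _ => ?_)
      have heval : (q i).eval (t : ℂ)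
          = Complex.exp (Complex.I * ν i * s) * (p i).eval ((t : ℂ) + s)
            - Complex.exp (Complex.I * ν j * s) * (p i).eval (t : ℂ) := by
        simp [hqdef, eval_comp]
      have hexp : Complex.exp (Complex.I * ν i * ((t + s : ℝ) : ℂ))
          = Complex.exp (Complex.I * ν i * t) * Complex.exp (Complex.I * ν i * s) := by
        rw [← Complex.exp_add]
        congr 1
        push_cast
        ring
      rw [heval, hexp]
      push_cast
      ring
    have hGbd : ∀ t : ℝ, ‖G t‖ ≤ B + B := by
      intro t
      rw [hGdef]
      calc ‖F (t + s) - Complex.exp (Complex.I * ν j * s) * F t‖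
          ≤ ‖F (t + s)‖ + ‖Complex.exp (Complex.I * ν j * s) * F t‖ :=
            norm_sub_le _ _
        _ ≤ B + B := by
            rw [norm_mul, abs_exp_I_mul, one_mul]
            exact add_le_add (hB _) (hB _)
    -- weights
    have hwle : ∀ i ∈ univ.erase k,
        (if q i = 0 then 0 else (q i).natDegree + 1)
          ≤ (if p i = 0 then 0 else (p i).natDegree + 1) := by
      intro i _
      have hqi : q i = C (Complex.exp (Complex.I * ν i * s)) * (p i).comp (X + C (s : ℂ))
          - C (Complex.exp (Complex.I * ν j * s)) * p i := rfl
      rcases eq_or_ne (p i) 0 with h0 | h0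
      · simp [hqi, h0]
      rcases eq_or_ne (Complex.exp (Complex.I * ν i * s))
          (Complex.exp (Complex.I * ν j * s)) with he | he
      · rw [← he] at hqi
        have hlt := weight_shiftsub_lt (a := Complex.exp (Complex.I * ν i * s)) (s := (s : ℂ)) h0
        rw [← hqi] at hlt
        simp only [h0, if_neg, if_false]
        omega
      · have hnd : (q i).natDegree = (p i).natDegree := by
          rw [hqi]; exact natDegree_shiftsub he (s : ℂ) (p i)
        simp only [h0, if_neg, if_false]
        split <;> omega
    have hwlt : (if q j = 0 then 0 else (q j).natDegree + 1)
        < (if p j = 0 then 0 else (p j).natDegree + 1) := by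
      have := weight_shiftsub_lt (a := Complex.exp (Complex.I * ν j * s)) (s := (s : ℂ)) hpj
      simpa [hqdef, hpj] using this
    have hsumlt : (∑ i ∈ univ.erase k, (if q i = 0 then 0 else (q i).natDegree + 1)) < n := by
      rw [← hsum]
      exact Finset.sum_lt_sum hwle ⟨j, hj, hwlt⟩
    have hqk := IH _ hsumlt q G hG ⟨B + B, hGbd⟩ rfl
    rcases eq_or_ne (p k) 0 with h0 | h0
    · simp [h0]
    · have hnd : (q k).natDegree = (p k).natDegree := by
        rw [show (q k) = C (Complex.exp (Complex.I * ν k * s)) * (p k).comp (X + C (s : ℂ))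
          - C (Complex.exp (Complex.I * ν j * s)) * p k from rfl]
        exact natDegree_shiftsub hab (s : ℂ) (p k)
      omega

theorem bounded_expPoly_const (m : ℕ) (ν : Fin m → ℝ) (hν : Function.Injective ν)
    (p : Fin m → Polynomial ℂ)
    (F : ℝ → ℂ)
    (hF : ∀ t : ℝ, F t = ∑ j, Complex.exp (Complex.I * (ν j) * t) * (p j).eval (t : ℂ))
    (hbd : ∃ B : ℝ, ∀ t : ℝ, ‖F t‖ ≤ B) :
    ∀ j, (p j).natDegree = 0 := by
  intro k
  exact aux m ν hν k _ p F hF hbd rfl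
end
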